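/- Let f ∈ ℂ[x,y] be a homogeneous polynomial of degree d > 1 whose singularity at the origin is not isolated (i.e. f_x and f_y have a common zero in ℂ² other than the origin). Then the following are equivalent: (i) for every g ∈ ℂ[x,y], if f^k·g ∈ D_f for some k ≥ 1, then f·g ∈ D_f (i.e. every torsion element of B(f) is annihilated by t, N(f) = 1); (ii) for every h ∈ J_f, if f^k·h ∈ D_f for some k ≥ 1, then h ∈ D_f (i.e. C(f) = J_f/D_f is torsion free over ℂ[t]). -/

import Mathlib

/-!
Writing `{f, g} = f_x g_y - f_y g_x`, the map `g ↦ {f, g}` is a derivation killing `f`, so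
`D_f` is stable under multiplication by `f`. For `f` homogeneous of degree `d` and `g`
homogeneous of degree `e`, Euler's identity gives
`(e + 1) g f_y = d f g_y - {f, x g}` and `(e + 1) g f_x = d f g_x + {f, y g}`,
hence `J_f ⊆ f R + D_f`; conversely `d f = x f_x + y f_y ∈ J_f`. These two inclusions alone
make both torsion conditions equivalent.
-/

open MvPolynomial

/-- Membership in `D_f = {f_x·∂g/∂y − f_y·∂g/∂x : g ∈ ℂ[x,y]}`. -/
def Dmem (f w : MvPolynomial (Fin 2) ℂ) : Prop :=
  ∃ g : MvPolynomial (Fin 2) ℂ,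
    w = pderiv 0 f * pderiv 1 g - pderiv 1 f * pderiv 0 g

namespace Submodule

variable {K R : Type*} [CommRing K] [CommRing R] [Algebra K R]

theorem pow_mul_mem_of_forall_mul_mem {f : R} {D : Submodule K R} (hD : ∀ a ∈ D, f * a ∈ D)
    (k : ℕ) {a : R} (ha : a ∈ D) : f ^ k * a ∈ D := by
  induction k with
  | zero => simpa using ha
  | succ k ih => simpa [pow_succ', mul_assoc] using hD _ ih

theorem torsion_annihilated_iff_torsionFree_of_le_sup {f : R} {D : Submodule K R}
    {J : Ideal R} (hD : ∀ a ∈ D, f * a ∈ D) (hfJ : f ∈ J)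
    (hJ : J.restrictScalars K ≤ (Ideal.span {f}).restrictScalars K ⊔ D) :
    (∀ (g : R) (k : ℕ), 1 ≤ k → f ^ k * g ∈ D → f * g ∈ D) ↔
      ∀ h ∈ J, ∀ k : ℕ, 1 ≤ k → f ^ k * h ∈ D → h ∈ D := by
  constructor
  · intro H h hh k hk hkh
    obtain ⟨_, hfu, r, hr, rfl⟩ := Submodule.mem_sup.mp (hJ hh)
    obtain ⟨u, rfl⟩ := Ideal.mem_span_singleton'.mp hfu
    have hu : f ^ (k + 1) * u ∈ D := by
      convert sub_mem hkh (pow_mul_mem_of_forall_mul_mem hD k hr) using 1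
      ring
    simpa [mul_comm u f] using add_mem (H u (k + 1) (by omega) hu) hr
  · intro H g k hk hkg
    refine H (f * g) (J.mul_mem_right g hfJ) k hk ?_
    rw [mul_left_comm]
    exact hD _ hkg

end Submodule

namespace MvPolynomial

variable {K : Type*}

section CommRing

variable [CommRing K]

noncomputable def hamiltonian (f : MvPolynomial (Fin 2) K) :
    Derivation K (MvPolynomial (Fin 2) K) (MvPolynomial (Fin 2) K) :=
  pderiv 0 f • pderiv 1 - pderiv 1 f • pderiv 0

theorem hamiltonian_apply (f g : MvPolynomial (Fin 2) K) :
    hamiltonian f g = pderiv 0 f * pderiv 1 g - pderiv 1 f * pderiv 0 g :=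
  rfl

theorem hamiltonian_self (f : MvPolynomial (Fin 2) K) : hamiltonian f f = 0 := by
  rw [hamiltonian_apply, mul_comm, sub_self]

noncomputable def hamiltonianRange (f : MvPolynomial (Fin 2) K) :
    Submodule K (MvPolynomial (Fin 2) K) :=
  LinearMap.range (hamiltonian f).toLinearMap

theorem mul_mem_hamiltonianRange {f a : MvPolynomial (Fin 2) K}
    (ha : a ∈ hamiltonianRange f) : f * a ∈ hamiltonianRange f := by
  obtain ⟨g, rfl⟩ := ha
  refine ⟨f * g, ?_⟩
  simp [Derivation.leibniz, hamiltonian_self]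

theorem IsHomogeneous.euler_two {f : MvPolynomial (Fin 2) K} {d : ℕ} (hf : f.IsHomogeneous d) :
    X 0 * pderiv 0 f + X 1 * pderiv 1 f = (d : MvPolynomial (Fin 2) K) * f := by
  simpa [Fin.sum_univ_two, nsmul_eq_mul] using hf.sum_X_mul_pderiv

theorem IsHomogeneous.succ_nsmul_mul_pderiv_one {f g : MvPolynomial (Fin 2) K} {d e : ℕ}
    (hf : f.IsHomogeneous d) (hg : g.IsHomogeneous e) :
    (e + 1) • (g * pderiv 1 f) = d • (f * pderiv 1 g) - hamiltonian f (X 0 * g) := by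
  simp only [Derivation.leibniz, hamiltonian_apply, smul_eq_mul, nsmul_eq_mul, pderiv_X,
    Pi.single_apply]
  push_cast
  linear_combination pderiv 1 g * hf.euler_two - pderiv 1 f * hg.euler_two

theorem IsHomogeneous.succ_nsmul_mul_pderiv_zero {f g : MvPolynomial (Fin 2) K} {d e : ℕ}
    (hf : f.IsHomogeneous d) (hg : g.IsHomogeneous e) :
    (e + 1) • (g * pderiv 0 f) = d • (f * pderiv 0 g) + hamiltonian f (X 1 * g) := by
  simp only [Derivation.leibniz, hamiltonian_apply, smul_eq_mul, nsmul_eq_mul, pderiv_X,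
    Pi.single_apply]
  push_cast
  linear_combination pderiv 0 g * hf.euler_two - pderiv 0 f * hg.euler_two

end CommRing

section Field

variable [Field K] [CharZero K]

theorem IsHomogeneous.mem_span_pderiv {f : MvPolynomial (Fin 2) K} {d : ℕ}
    (hf : f.IsHomogeneous d) (hd : d ≠ 0) :
    f ∈ Ideal.span {pderiv 0 f, pderiv 1 f} := by
  refine Ideal.mem_span_pair.mpr ⟨C (d : K)⁻¹ * X 0, C (d : K)⁻¹ * X 1, ?_⟩
  have hdC : (d : MvPolynomial (Fin 2) K) = C (d : K) := (map_natCast C d).symm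
  rw [mul_assoc, mul_assoc, ← mul_add, hf.euler_two, hdC, ← mul_assoc,
    ← map_mul, inv_mul_cancel₀ (Nat.cast_ne_zero.mpr hd), C_1, one_mul]

theorem IsHomogeneous.mul_pderiv_mem_sup {f : MvPolynomial (Fin 2) K} {d : ℕ}
    (hf : f.IsHomogeneous d) (i : Fin 2) (g : MvPolynomial (Fin 2) K) :
    g * pderiv i f ∈ (Ideal.span {f}).restrictScalars K ⊔ hamiltonianRange f := by
  set S := (Ideal.span {f}).restrictScalars K ⊔ hamiltonianRange f
  have hfS : ∀ a, d • (f * a) ∈ S := fun a => S.smul_of_tower_mem d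
    (Submodule.mem_sup_left (Ideal.mul_mem_right a _ (Ideal.mem_span_singleton_self f)))
  have hDS : ∀ a, hamiltonian f a ∈ S := fun a => Submodule.mem_sup_right ⟨a, rfl⟩
  induction g using MvPolynomial.induction_on' with
  | monomial u c =>
    have hg := isHomogeneous_monomial (R := K) c (n := u.degree) rfl
    suffices (u.degree + 1) • (monomial u c * pderiv i f) ∈ S by
      rw [← Nat.cast_smul_eq_nsmul K] at this
      simpa [smul_smul, Nat.cast_add_one_ne_zero] using
        S.smul_mem ((u.degree + 1 : ℕ) : K)⁻¹ this
    match i with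
    | 0 =>
      rw [hf.succ_nsmul_mul_pderiv_zero hg]
      exact S.add_mem (hfS _) (hDS _)
    | 1 =>
      rw [hf.succ_nsmul_mul_pderiv_one hg]
      exact S.sub_mem (hfS _) (hDS _)
  | add p q hp hq => simpa [add_mul] using S.add_mem hp hq

theorem IsHomogeneous.span_pderiv_le_sup {f : MvPolynomial (Fin 2) K} {d : ℕ}
    (hf : f.IsHomogeneous d) :
    (Ideal.span {pderiv 0 f, pderiv 1 f}).restrictScalars K ≤
      (Ideal.span {f}).restrictScalars K ⊔ hamiltonianRange f := by
  intro h hh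
  obtain ⟨a, b, rfl⟩ := Ideal.mem_span_pair.mp hh
  exact add_mem (hf.mul_pderiv_mem_sup 0 a) (hf.mul_pderiv_mem_sup 1 b)

end Field

end MvPolynomial

theorem statement6_general (f : MvPolynomial (Fin 2) ℂ) (d : ℕ) (hd : 1 < d)
    (hf : f.IsHomogeneous d) :
    (∀ (g : MvPolynomial (Fin 2) ℂ) (k : ℕ), 1 ≤ k → Dmem f (f ^ k * g) → Dmem f (f * g)) ↔
      (∀ h ∈ Ideal.span ({pderiv 0 f, pderiv 1 f} : Set (MvPolynomial (Fin 2) ℂ)),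
        ∀ k : ℕ, 1 ≤ k → Dmem f (f ^ k * h) → Dmem f h) := by
  have hDmem : ∀ w, Dmem f w ↔ w ∈ hamiltonianRange f := fun w => by
    simp [Dmem, hamiltonianRange, hamiltonian_apply, eq_comm]
  simp only [hDmem]
  exact Submodule.torsion_annihilated_iff_torsionFree_of_le_sup
    (fun _ => mul_mem_hamiltonianRange) (hf.mem_span_pderiv (by omega)) hf.span_pderiv_le_sup

/-- For `f ∈ ℂ[x,y]` homogeneous of degree `d > 1` with a non-isolated
singularity at the origin, the torsion order of `B(f)` equals `1` (every torsion element
of `B(f) = ℂ[x,y]/D_f` is annihilated by `t`) iff `C(f) = J_f/D_f` is torsion free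
over `ℂ[t]`. -/
theorem statement6 (f : MvPolynomial (Fin 2) ℂ) (d : ℕ) (hd : 1 < d)
    (hf : f.IsHomogeneous d)
    (hni : ∃ p : Fin 2 → ℂ, p ≠ 0 ∧ eval p (pderiv 0 f) = 0 ∧ eval p (pderiv 1 f) = 0) :
    (∀ (g : MvPolynomial (Fin 2) ℂ) (k : ℕ), 1 ≤ k → Dmem f (f ^ k * g) → Dmem f (f * g)) ↔
      (∀ h ∈ Ideal.span ({pderiv 0 f, pderiv 1 f} : Set (MvPolynomial (Fin 2) ℂ)),
        ∀ k : ℕ, 1 ≤ k → Dmem f (f ^ k * h) → Dmem f h) :=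
  statement6_general f d hd hf
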